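/- Let (A_i)_{i∈I} be a POVM on a finite-dimensional complex Hilbert space H measured via its Lüders channel, and let ψ be a unit vector. Then Σ_i ⟨ψ, A_i^{1/2} ψ⟩² ≥ Σ_i ⟨ψ, A_i ψ⟩²; equivalently, the fidelity-based disturbance D_F(A;ψ) = 1 − Σ_i ⟨ψ, A_i^{1/2} ψ⟩² is at most the Tsallis-T_2 uncertainty T_2(A;ψ) = 1 − Σ_i ⟨ψ, A_i ψ⟩² of the outcome distribution. In particular, T_2(A;ψ) = 0 implies D_F(A;ψ) = 0. -/

import Mathlib

/-!
Write `pᵢ = ⟨ψ, Aᵢ ψ⟩` and `qᵢ = ⟨ψ, √Aᵢ ψ⟩`. Since `0 ≤ Aᵢ ≤ 1`, the spectrum of `Aᵢ` lies in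
`[0, 1]`, where `x ≤ √x`; by the functional calculus `Aᵢ ≤ √Aᵢ`, so `pᵢ ≤ qᵢ` and the first
inequality holds termwise. Cauchy–Schwarz gives `qᵢ² ≤ ‖ψ‖² ‖√Aᵢ ψ‖² = pᵢ`, hence
`∑ qᵢ² ≤ ∑ pᵢ = 1`, and `∑ pᵢ² = 1` forces `∑ qᵢ² = 1`.
-/

open Matrix
open scoped ComplexOrder

/-- The square root of a positive semidefinite matrix, as defined in the older Mathlib
(`Matrix.PosSemidef.sqrt`, since removed). -/
noncomputable def Matrix.PosSemidef.sqrt {n : Type*} [Fintype n] [DecidableEq n]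
    {A : Matrix n n ℂ} (hA : A.PosSemidef) : Matrix n n ℂ :=
  (hA.1.eigenvectorUnitary : Matrix n n ℂ) *
    diagonal (fun i => ((Real.sqrt (hA.1.eigenvalues i) : ℝ) : ℂ)) *
    (star hA.1.eigenvectorUnitary : Matrix n n ℂ)

open scoped MatrixOrder

section CFC

variable {A : Type*} [Ring A] [StarRing A] [PartialOrder A] [Algebra ℝ A] [TopologicalSpace A]
  [StarOrderedRing A] [ContinuousFunctionalCalculus ℝ A IsSelfAdjoint] [NonnegSpectrumClass ℝ A]
  {a : A}

lemma cfc_sqrt_mul_self (ha : 0 ≤ a) : cfc Real.sqrt a * cfc Real.sqrt a = a := by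
  rw [← cfc_mul ..]
  conv_rhs => rw [← cfc_id' ℝ a]
  exact cfc_congr fun x hx => Real.mul_self_sqrt (spectrum_nonneg_of_nonneg ha hx)

lemma le_cfc_sqrt (ha : IsSelfAdjoint a) (ha₁ : a ≤ 1) : a ≤ cfc Real.sqrt a := by
  have hspec := (CFC.le_one_iff (R := ℝ) a).mp ha₁
  conv_lhs => rw [← cfc_id' ℝ a]
  rw [cfc_le_iff ..]
  exact fun x hx => Real.le_sqrt_self_iff.mpr (hspec x hx)

end CFC

namespace Matrix

variable {n 𝕜 : Type*} [Fintype n] [RCLike 𝕜]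

lemma norm_dotProduct_mulVec_sq_le (B : Matrix n n 𝕜) (x : n → 𝕜) :
    ‖star x ⬝ᵥ B *ᵥ x‖ ^ 2 ≤
      RCLike.re (star x ⬝ᵥ x) * RCLike.re (star x ⬝ᵥ (Bᴴ * B) *ᵥ x) := by
  have h := inner_mul_inner_self_le (𝕜 := 𝕜) (WithLp.toLp 2 x) (WithLp.toLp 2 (B *ᵥ x))
  have hxx : x ⬝ᵥ star x = star x ⬝ᵥ x := dotProduct_comm _ _
  have hyy : B *ᵥ x ⬝ᵥ star (B *ᵥ x) = star x ⬝ᵥ (Bᴴ * B) *ᵥ x := by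
    rw [dotProduct_comm, star_mulVec, ← dotProduct_mulVec, mulVec_mulVec]
  rw [norm_inner_symm (WithLp.toLp 2 (B *ᵥ x)), ← sq] at h
  rwa [EuclideanSpace.inner_toLp_toLp, EuclideanSpace.inner_toLp_toLp,
    EuclideanSpace.inner_toLp_toLp, dotProduct_comm, hxx, hyy] at h

lemma re_dotProduct_mulVec_le_of_le {B C : Matrix n n 𝕜} (h : B ≤ C) (x : n → 𝕜) :
    RCLike.re (star x ⬝ᵥ B *ᵥ x) ≤ RCLike.re (star x ⬝ᵥ C *ᵥ x) := by
  have h' := (le_iff.mp h).re_dotProduct_nonneg x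
  rwa [sub_mulVec, dotProduct_sub, map_sub, sub_nonneg] at h'

namespace PosSemidef

variable [DecidableEq n] {A : Matrix n n ℂ} (hA : A.PosSemidef)
include hA

lemma sqrt_eq_cfc : hA.sqrt = cfc Real.sqrt A := by
  rw [hA.1.cfc_eq, IsHermitian.cfc, Unitary.conjStarAlgAut_apply, PosSemidef.sqrt]
  rfl

lemma le_sqrt (h₁ : A ≤ 1) : A ≤ hA.sqrt :=
  hA.sqrt_eq_cfc ▸ le_cfc_sqrt hA.1 h₁

lemma isHermitian_sqrt : hA.sqrt.IsHermitian :=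
  hA.sqrt_eq_cfc ▸ cfc_predicate Real.sqrt A

lemma sqrt_mul_self : hA.sqrt * hA.sqrt = A :=
  hA.sqrt_eq_cfc ▸ cfc_sqrt_mul_self hA.nonneg

lemma re_dotProduct_sqrt_mulVec_sq_le (x : n → ℂ) :
    (star x ⬝ᵥ hA.sqrt *ᵥ x).re ^ 2 ≤ (star x ⬝ᵥ x).re * (star x ⬝ᵥ A *ᵥ x).re := by
  have h := norm_dotProduct_mulVec_sq_le hA.sqrt x
  rw [hA.isHermitian_sqrt.eq, hA.sqrt_mul_self] at h
  exact (sq_le_sq.mpr ((Complex.abs_re_le_norm _).trans (le_abs_self _))).trans h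

end PosSemidef

end Matrix

/-- For a POVM `(A i)` measured via its Lüders channel and a unit
vector `ψ`, `∑ i ⟨ψ, √(A i) ψ⟩² ≥ ∑ i ⟨ψ, A i ψ⟩²`; equivalently the fidelity-based
disturbance `D_F = 1 - ∑ i ⟨ψ, √(A i) ψ⟩²` is at most the Tsallis-`T₂` uncertainty
`T₂ = 1 - ∑ i ⟨ψ, A i ψ⟩²`. In particular `T₂ = 0` implies `D_F = 0`. -/
theorem lueders_disturbance_le_tsallis {n : ℕ} {I : Type*} [Fintype I]
    (A : I → Matrix (Fin n) (Fin n) ℂ)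
    (hA : ∀ i, (A i).PosSemidef)
    (hsum : ∑ i, A i = 1)
    (ψ : Fin n → ℂ) (hψ : star ψ ⬝ᵥ ψ = 1) :
    (∑ i, ((star ψ ⬝ᵥ (hA i).sqrt *ᵥ ψ).re) ^ 2
        ≥ ∑ i, ((star ψ ⬝ᵥ (A i) *ᵥ ψ).re) ^ 2) ∧
    (1 - ∑ i, ((star ψ ⬝ᵥ (A i) *ᵥ ψ).re) ^ 2 = 0 →
      1 - ∑ i, ((star ψ ⬝ᵥ (hA i).sqrt *ᵥ ψ).re) ^ 2 = 0) := by
  set p := fun i => (star ψ ⬝ᵥ A i *ᵥ ψ).re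
  set q := fun i => (star ψ ⬝ᵥ (hA i).sqrt *ᵥ ψ).re
  have hp_nonneg i : 0 ≤ p i := (hA i).re_dotProduct_nonneg ψ
  have hA_le_one i : A i ≤ 1 :=
    hsum ▸ Finset.single_le_sum (fun j _ => (hA j).nonneg) (Finset.mem_univ i)
  have hpq i : p i ≤ q i := re_dotProduct_mulVec_le_of_le ((hA i).le_sqrt (hA_le_one i)) ψ
  have hqp i : q i ^ 2 ≤ p i := by
    simpa [hψ] using (hA i).re_dotProduct_sqrt_mulVec_sq_le ψ
  have hsum_p : ∑ i, p i = 1 := by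
    simp only [p, ← Complex.re_sum, ← dotProduct_sum, ← sum_mulVec, hsum, one_mulVec, hψ,
      Complex.one_re]
  show (∑ i, q i ^ 2 ≥ ∑ i, p i ^ 2) ∧ (1 - ∑ i, p i ^ 2 = 0 → 1 - ∑ i, q i ^ 2 = 0)
  have hsq_le : ∑ i, p i ^ 2 ≤ ∑ i, q i ^ 2 :=
    Finset.sum_le_sum fun i _ => pow_le_pow_left₀ (hp_nonneg i) (hpq i) 2
  have hsq_le_one : ∑ i, q i ^ 2 ≤ 1 := hsum_p ▸ Finset.sum_le_sum fun i _ => hqp i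
  exact ⟨hsq_le, fun h => by linarith⟩
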